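/- Let G = (L, Σ, δ, O) be a POMDP, T ⊆ L, and l ∈ L. Player 1 has an observation-based strategy that is positive winning for coBüchi(T) from l if and only if there exists a state l' reachable from l in the underlying graph of G such that Player 1 has an observation-based strategy that is almost-sure winning for Safe(T) from l'. -/

import Mathlib

open scoped ENNReal

/-- A partially-observable Markov decision process (POMDP) with states `L`,
actions `A` and observations `O`: a probabilistic transition function and an
observation function (the observations partition the state space). -/
structure POMDP (L : Type) (A : Type) (O : Type) where
  δ : L → A → PMF L
  obs : L → O

namespace POMDP

variable {L A O : Type}

/-- A (randomized) strategy: given the initial state and the history of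
(action, state) steps played so far, it chooses a distribution on actions. -/
abbrev Strategy (L A : Type) := L → List (A × L) → PMF A

/-- The sequence of states visited along a finite prefix. -/
def statesOf (l : L) (h : List (A × L)) : List L := l :: h.map Prod.snd

/-- Auxiliary probability of a finite prefix, for a strategy `π` given as a
function of the remaining history. -/
noncomputable def prefProbAux (M : POMDP L A O) :
    (List (A × L) → PMF A) → L → List (A × L) → ℝ≥0∞
  | _, _, [] => 1
  | π, l, (a, l') :: h =>
      π [] a * M.δ l a l' * M.prefProbAux (fun h' => π ((a, l') :: h')) l' h

/-- The probability, under strategy `α` from state `l`, that the play starts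
with the finite prefix `h` of (action, state) steps. -/
noncomputable def prefProb (M : POMDP L A O) (α : Strategy L A) (l : L)
    (h : List (A × L)) : ℝ≥0∞ :=
  M.prefProbAux (α l) l h

/-- A prefix is consistent with `α` from `l` if it has positive probability. -/
def Consistent (M : POMDP L A O) (α : Strategy L A) (l : L) (h : List (A × L)) : Prop :=
  0 < M.prefProb α l h

/-- The probability, under strategy `α` from state `l`, that the length-`n`
prefix of the play satisfies the predicate `P`. -/
noncomputable def horizonProb (M : POMDP L A O) [Fintype L] [Fintype A]
    (α : Strategy L A) (l : L) (n : ℕ) (P : List (A × L) → Prop) : ℝ≥0∞ :=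
  ∑ f : Fin n → A × L,
    Set.indicator {g : Fin n → A × L | P (List.ofFn g)}
      (fun g => M.prefProb α l (List.ofFn g)) f

/-- `Pr_l^α(Reach(T))`: probability that the play visits a state of `T`
(as the increasing limit of the finite-horizon reachability probabilities). -/
noncomputable def reachProb (M : POMDP L A O) [Fintype L] [Fintype A]
    (α : Strategy L A) (l : L) (T : Set L) : ℝ≥0∞ :=
  ⨆ n, M.horizonProb α l n (fun h => ∃ s ∈ statesOf l h, s ∈ T)

/-- `Pr_l^α(Safe(T))`: probability that all states of the play lie in `T`
(as the decreasing limit of the finite-horizon safety probabilities). -/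
noncomputable def safeProb (M : POMDP L A O) [Fintype L] [Fintype A]
    (α : Strategy L A) (l : L) (T : Set L) : ℝ≥0∞ :=
  ⨅ n, M.horizonProb α l n (fun h => ∀ s ∈ statesOf l h, s ∈ T)

/-- `Pr_l^α(Until(T₁,T₂))`: probability that the play visits `T₂` at some
position `k` with all positions `≤ k` in `T₁`. -/
noncomputable def untilProb (M : POMDP L A O) [Fintype L] [Fintype A]
    (α : Strategy L A) (l : L) (T₁ T₂ : Set L) : ℝ≥0∞ :=
  ⨆ n, M.horizonProb α l n (fun h => ∃ k, ∃ hk : k < (statesOf l h).length,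
      (statesOf l h).get ⟨k, hk⟩ ∈ T₂ ∧
      ∀ j, ∀ hj : j < (statesOf l h).length, j ≤ k → (statesOf l h).get ⟨j, hj⟩ ∈ T₁)

/-- `Pr_l^α(coBüchi(T))`: probability that from some point on all states of
the play lie in `T`. -/
noncomputable def coBuchiProb (M : POMDP L A O) [Fintype L] [Fintype A]
    (α : Strategy L A) (l : L) (T : Set L) : ℝ≥0∞ :=
  ⨆ k, ⨅ n, M.horizonProb α l n (fun h =>
    ∀ j, ∀ hj : j < (statesOf l h).length, k ≤ j → (statesOf l h).get ⟨j, hj⟩ ∈ T)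

/-- `Pr_l^α(Büchi(T))`: probability that the play visits `T` infinitely often. -/
noncomputable def buchiProb (M : POMDP L A O) [Fintype L] [Fintype A]
    (α : Strategy L A) (l : L) (T : Set L) : ℝ≥0∞ :=
  ⨅ k, ⨆ n, M.horizonProb α l n (fun h =>
    ∃ j, ∃ hj : j < (statesOf l h).length, k ≤ j ∧ (statesOf l h).get ⟨j, hj⟩ ∈ T)

/-- A strategy is observation-based if it plays the same distribution after any
two prefixes with the same sequences of observations and of actions. -/
def ObservationBased (M : POMDP L A O) (α : Strategy L A) : Prop :=
  ∀ l l' (h h' : List (A × L)), M.obs l = M.obs l' →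
    h.map Prod.fst = h'.map Prod.fst →
    h.map (fun p => M.obs p.2) = h'.map (fun p => M.obs p.2) →
    α l h = α l' h'

/-- A strategy is pure if it always plays a Dirac distribution. -/
def PureStrategy (α : Strategy L A) : Prop := ∀ l h, ∃ a, α l h = PMF.pure a

/-- Edge of the underlying graph of the POMDP. -/
def Edge (M : POMDP L A O) (l l' : L) : Prop := ∃ a, 0 < M.δ l a l'

/-- Reachability in the underlying graph of the POMDP. -/
def ReachableFrom (M : POMDP L A O) (l l' : L) : Prop :=
  Relation.ReflTransGen M.Edge l l'

/-- The memory state reached by a memory-update function `u` (together with the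
current state) after running through a prefix. -/
def memRun (M : POMDP L A O) {Mem : Type} (u : Mem → O → A → Mem) :
    Mem → L → List (A × L) → Mem × L
  | m, l, [] => (m, l)
  | m, l, (a, l') :: h => M.memRun u (u m (M.obs l) a) l' h

/-- The (observation-based) strategy induced by a finite-memory machine given by
memory-update function `u`, next-action function `next` and initial memory `m0`. -/
def fmStrategy (M : POMDP L A O) {Mem : Type} (u : Mem → O → A → Mem)
    (next : Mem → O → PMF A) (m0 : Mem) : Strategy L A :=
  fun l h =>
    let p := M.memRun u m0 l h
    next p.1 (M.obs p.2)

/-- The distribution choosing `x` and `y` with probability 1/2 each. -/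
noncomputable def half (x y : L) : PMF L :=
  (PMF.uniformOfFintype Bool).map (fun b => if b then x else y)

end POMDP

/-!
If `α` wins `coBüchi(T)` with positive probability, then for some `k` the play stays in `T` from
step `k` on with positive probability, so some prefix of length `k` has positive probability and
the residual strategy after it is positively safe from the state it reaches.

Positive safety improves to almost-sure safety at a reachable state. Let `v` be the largest safety
value over the states reachable from `l`. Conditioning on the first `n` steps gives
`Pr(Safe) ≤ v · Pr(first n steps safe)`, hence `Pr(Safe) ≤ v · Pr(Safe)` in the limit, which
forces `v = 1` as `Pr(Safe) > 0`. A state of value `1` has an almost-sure safe observation-based strategy: the action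
probabilities of strategies form a compact space, finite-horizon probabilities depend continuously
on them, and both observation-basedness and the safety bounds are closed conditions.

Conversely, almost-sure safety implies positive coBüchi, and positive coBüchi propagates backwards
along an edge by first playing the action of that edge.
-/

open scoped ENNReal
open Filter Topology

theorem PMF.sum_coe_eq_one {α : Type*} [Fintype α] (p : PMF α) : ∑ a, p a = 1 := by
  simpa [tsum_fintype] using p.tsum_coe

namespace POMDP

variable {L A O : Type}

def lastState : L → List (A × L) → L
  | l, [] => l
  | _, (_, l') :: h => lastState l' h

def Strategy.after (α : Strategy L A) (l : L) (G : List (A × L)) : Strategy L A :=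
  fun _ h => α l (G ++ h)

noncomputable def Strategy.cons (a : A) (β : Strategy L A) : Strategy L A :=
  fun _ h => match h with
    | [] => PMF.pure a
    | (_, l') :: h' => β l' h'

def Strategy.weights (α : Strategy L A) : L → List (A × L) → A → ℝ≥0∞ :=
  fun l h a => α l h a

def PrefixClosed (P : List (A × L) → Prop) : Prop :=
  ∀ G h, P (G ++ h) → P G

theorem PrefixClosed.append_left {P : List (A × L) → Prop} (hP : PrefixClosed P)
    (G : List (A × L)) : PrefixClosed fun h => P (G ++ h) :=
  fun X Y hXY => hP (G ++ X) Y (by rwa [List.append_assoc])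

def SafeFrom (k : ℕ) (l : L) (T : Set L) (h : List (A × L)) : Prop :=
  ∀ s ∈ (statesOf l h).drop k, s ∈ T

variable {M : POMDP L A O} {T : Set L}

section PrefixProbability

theorem prefProb_nil (α : Strategy L A) (l : L) : M.prefProb α l [] = 1 :=
  rfl

theorem prefProb_cons (α : Strategy L A) (l : L) (a : A) (l' : L) (h : List (A × L)) :
    M.prefProb α l ((a, l') :: h) =
      α l [] a * M.δ l a l' * M.prefProb (α.after l [(a, l')]) l' h :=
  rfl

theorem prefProb_append (G h : List (A × L)) :
    ∀ (α : Strategy L A) (l : L),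
      M.prefProb α l (G ++ h) = M.prefProb α l G * M.prefProb (α.after l G) (lastState l G) h := by
  induction G with
  | nil => intro α l; rw [List.nil_append, prefProb_nil, one_mul]; rfl
  | cons x G ih =>
    intro α l
    obtain ⟨a, l'⟩ := x
    rw [List.cons_append, prefProb_cons, prefProb_cons, ih]
    simp only [mul_assoc]
    rfl

theorem prefProb_le_one (h : List (A × L)) :
    ∀ (α : Strategy L A) (l : L), M.prefProb α l h ≤ 1 := by
  induction h with
  | nil => intro α l; exact (prefProb_nil α l).le
  | cons x h ih =>
    intro α l
    rw [prefProb_cons]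
    calc _ ≤ (1 : ℝ≥0∞) * 1 * 1 := by
          gcongr
          exacts [PMF.coe_le_one _ _, PMF.coe_le_one _ _, ih _ _]
      _ = 1 := by ring

theorem reachableFrom_lastState (h : List (A × L)) :
    ∀ {α : Strategy L A} {l : L}, 0 < M.prefProb α l h → M.ReachableFrom l (lastState l h) := by
  induction h with
  | nil => intro α l _; exact Relation.ReflTransGen.refl
  | cons x h ih =>
    intro α l hpos
    obtain ⟨a, l'⟩ := x
    rw [prefProb_cons, CanonicallyOrderedAdd.mul_pos, CanonicallyOrderedAdd.mul_pos] at hpos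
    exact Relation.ReflTransGen.head ⟨a, hpos.1.2⟩ (ih hpos.2)

end PrefixProbability

theorem ObservationBased.after {α : Strategy L A} (hα : M.ObservationBased α) (l : L)
    (G : List (A × L)) : M.ObservationBased (α.after l G) :=
  fun _ _ h h' _ hact hobs => hα l l (G ++ h) (G ++ h') rfl (by simp [hact]) (by simp [hobs])

theorem ObservationBased.cons {β : Strategy L A} (hβ : M.ObservationBased β) (a : A) :
    M.ObservationBased (Strategy.cons a β) := by
  rintro _ _ (_ | ⟨x, h⟩) (_ | ⟨x', h'⟩) _ hact hobs
  · rfl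
  · simp at hact
  · simp at hact
  · simp only [List.map_cons, List.cons.injEq] at hact hobs
    exact hβ x.2 x'.2 h h' hobs.1 hact.2 hobs.2

section Safety

theorem prefixClosed_safeFrom (k : ℕ) (l : L) (T : Set L) :
    PrefixClosed (SafeFrom (A := A) k l T) :=
  fun G h hGh s hs => hGh s <| by
    rw [statesOf, List.map_append, ← List.cons_append, List.drop_append]
    exact List.mem_append_left _ hs

theorem lastState_mem_statesOf (l : L) (G : List (A × L)) : lastState l G ∈ statesOf l G := by
  induction G generalizing l with
  | nil => exact List.mem_singleton_self l
  | cons x G ih => exact List.mem_cons_of_mem _ (ih x.2)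

theorem safeFrom_length_append {G : List (A × L)} {k : ℕ} (hG : G.length = k) (l : L)
    (h : List (A × L)) : SafeFrom k l T (G ++ h) ↔ SafeFrom 0 (lastState l G) T h := by
  subst hG
  induction G generalizing l with
  | nil => rfl
  | cons x G ih => exact ih x.2

theorem safeFrom_zero_append (l : L) (G h : List (A × L)) :
    SafeFrom 0 l T (G ++ h) ↔ SafeFrom 0 l T G ∧ SafeFrom 0 (lastState l G) T h := by
  have hlast := lastState_mem_statesOf l G
  simp only [SafeFrom, List.drop_zero, statesOf, List.map_append, ← List.cons_append,
    List.mem_append, List.mem_cons] at hlast ⊢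
  grind

end Safety

section Weights

variable (M) in
/-- `prefProbAux` for arbitrary action weights, capped at `1` so that it is continuous in them. -/
noncomputable def prefWeight : (List (A × L) → A → ℝ≥0∞) → L → List (A × L) → ℝ≥0∞
  | _, _, [] => 1
  | c, l, (a, l') :: h =>
      min (c [] a) 1 * M.δ l a l' * prefWeight (fun h' => c ((a, l') :: h')) l' h

theorem prefProb_eq_prefWeight (h : List (A × L)) :
    ∀ (α : Strategy L A) (l : L), M.prefProb α l h = M.prefWeight (α.weights l) l h := by
  induction h with
  | nil => intro α l; rfl
  | cons x h ih =>
    intro α l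
    obtain ⟨a, l'⟩ := x
    rw [prefProb_cons, prefWeight, ih, Strategy.weights, min_eq_left (PMF.coe_le_one _ _)]
    rfl

theorem prefWeight_le_one (h : List (A × L)) :
    ∀ (c : List (A × L) → A → ℝ≥0∞) (l : L), M.prefWeight c l h ≤ 1 := by
  induction h with
  | nil => intro c l; exact le_rfl
  | cons x h ih =>
    intro c l
    rw [prefWeight]
    calc _ ≤ (1 : ℝ≥0∞) * 1 * 1 := by
          gcongr
          exacts [min_le_right _ _, PMF.coe_le_one _ _, ih _ _]
      _ = 1 := by ring

theorem continuous_prefWeight (h : List (A × L)) :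
    ∀ l : L, Continuous fun c : List (A × L) → A → ℝ≥0∞ => M.prefWeight c l h := by
  induction h with
  | nil => intro l; exact continuous_const
  | cons x h ih =>
    intro l
    obtain ⟨a, l'⟩ := x
    have hne_top : ∀ {x : ℝ≥0∞}, x ≤ 1 → x ≠ ⊤ := ne_top_of_le_ne_top ENNReal.one_ne_top
    refine Continuous.ennreal_mul (Continuous.ennreal_mul ?_ continuous_const ?_ ?_)
      ((ih l').comp ?_) ?_ ?_
    · fun_prop
    · exact fun _ => Or.inr (hne_top (PMF.coe_le_one _ _))
    · exact fun _ => Or.inr (hne_top (min_le_right _ _))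
    · fun_prop
    · exact fun _ => Or.inr (hne_top (prefWeight_le_one _ _ _))
    · exact fun _ => Or.inr (hne_top (mul_le_one' (min_le_right _ _) (PMF.coe_le_one _ _)))

theorem exists_weights_eq_of_tendsto [Fintype A] {β : ℕ → Strategy L A}
    {c : L → List (A × L) → A → ℝ≥0∞}
    (hlim : Tendsto (fun k => (β k).weights) atTop (𝓝 c)) : ∃ γ : Strategy L A, γ.weights = c := by
  have hsum : ∀ l h, ∑ a, c l h a = 1 := fun l h =>
    (isClosed_eq (f := fun x : L → List (A × L) → A → ℝ≥0∞ => ∑ a, x l h a) (by fun_prop)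
      continuous_const).mem_of_tendsto hlim
      (Eventually.of_forall fun k => PMF.sum_coe_eq_one (β k l h))
  exact ⟨fun l h => PMF.ofFintype (c l h) (hsum l h), by
    funext l h a; exact PMF.ofFintype_apply _ _⟩

theorem ObservationBased.of_tendsto {β : ℕ → Strategy L A} {γ : Strategy L A}
    (hβ : ∀ k, M.ObservationBased (β k))
    (hlim : Tendsto (fun k => (β k).weights) atTop (𝓝 γ.weights)) : M.ObservationBased γ := by
  intro l l' h h' hl hact hobs
  have hweights : γ.weights l h = γ.weights l' h' :=
    (isClosed_eq (f := fun x : L → List (A × L) → A → ℝ≥0∞ => x l h) (g := fun x => x l' h')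
      (by fun_prop) (by fun_prop)).mem_of_tendsto hlim
      (Eventually.of_forall fun k => congrArg DFunLike.coe (hβ k l l' h h' hl hact hobs))
  exact PMF.ext (congrFun hweights)

end Weights

variable [Fintype L] [Fintype A]

section Horizon

theorem sum_prefProb_ofFn (n : ℕ) :
    ∀ (α : Strategy L A) (l : L), ∑ f : Fin n → A × L, M.prefProb α l (List.ofFn f) = 1 := by
  induction n with
  | zero => intro α l; simp [prefProb, prefProbAux]
  | succ n ih =>
    intro α l
    rw [← (Fin.consEquiv fun _ => A × L).sum_comp, Fintype.sum_prod_type]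
    simp only [Fin.consEquiv, Equiv.coe_fn_mk, List.ofFn_cons, prefProb_cons, ← Finset.mul_sum, ih,
      mul_one, Fintype.sum_prod_type, PMF.sum_coe_eq_one]

theorem horizonProb_le_one (α : Strategy L A) (l : L) (n : ℕ) (P : List (A × L) → Prop) :
    M.horizonProb α l n P ≤ 1 :=
  calc M.horizonProb α l n P ≤ ∑ f : Fin n → A × L, M.prefProb α l (List.ofFn f) :=
        Finset.sum_le_sum fun f _ => Set.indicator_le_self _ _ f
    _ = 1 := sum_prefProb_ofFn n α l

theorem horizonProb_eq_zero (α : Strategy L A) (l : L) (n : ℕ) {P : List (A × L) → Prop}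
    (hP : ∀ h, ¬ P h) : M.horizonProb α l n P = 0 := by
  simp [horizonProb, hP]

theorem horizonProb_add (α : Strategy L A) (l : L) (k m : ℕ) (P : List (A × L) → Prop) :
    M.horizonProb α l (k + m) P =
      ∑ g : Fin k → A × L, M.prefProb α l (List.ofFn g) *
        M.horizonProb (α.after l (List.ofFn g)) (lastState l (List.ofFn g)) m
          (fun h => P (List.ofFn g ++ h)) := by
  classical
  have happend : ∀ p : (Fin k → A × L) × (Fin m → A × L),
      Fin.appendEquiv k m p = Fin.append p.1 p.2 := fun _ => rfl
  simp only [horizonProb, ← (Fin.appendEquiv k m).sum_comp, Fintype.sum_prod_type, Finset.mul_sum,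
    Set.indicator_apply, Set.mem_ofPred_eq, happend, List.ofFn_fin_append, prefProb_append, mul_ite,
    mul_zero]

theorem horizonProb_antitone (α : Strategy L A) (l : L) {P : List (A × L) → Prop}
    (hP : PrefixClosed P) : Antitone fun n => M.horizonProb α l n P := by
  classical
  refine antitone_nat_of_succ_le fun n => ?_
  rw [horizonProb_add]
  refine Finset.sum_le_sum fun g _ => ?_
  simp only [Set.indicator_apply, Set.mem_ofPred_eq]
  split_ifs with hg
  · exact mul_le_of_le_one_right' (horizonProb_le_one _ _ _ _)
  · rw [horizonProb_eq_zero _ _ _ fun h hgh => hg (hP _ h hgh), mul_zero]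

theorem tendsto_horizonProb {β : ℕ → Strategy L A} {γ : Strategy L A}
    (hlim : Tendsto (fun k => (β k).weights) atTop (𝓝 γ.weights)) (l : L) (n : ℕ)
    (P : List (A × L) → Prop) :
    Tendsto (fun k => M.horizonProb (β k) l n P) atTop (𝓝 (M.horizonProb γ l n P)) := by
  classical
  have hcont : Continuous fun c : L → List (A × L) → A → ℝ≥0∞ =>
      ∑ f : Fin n → A × L, if P (List.ofFn f) then M.prefWeight (c l) l (List.ofFn f) else 0 :=
    continuous_finsetSum _ fun f _ => continuous_if_const _
      (fun _ => (continuous_prefWeight _ l).comp (continuous_apply l)) fun _ => continuous_const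
  simpa only [horizonProb, Set.indicator_apply, Set.mem_ofPred_eq, prefProb_eq_prefWeight,
    Function.comp_def] using (hcont.tendsto _).comp hlim

end Horizon

section Always

variable (M) in
noncomputable def alwaysProb (α : Strategy L A) (l : L) (P : List (A × L) → Prop) : ℝ≥0∞ :=
  ⨅ n, M.horizonProb α l n P

theorem alwaysProb_eq_zero (α : Strategy L A) (l : L) {P : List (A × L) → Prop}
    (hP : ∀ h, ¬ P h) : M.alwaysProb α l P = 0 :=
  le_antisymm ((iInf_le _ 0).trans_eq (horizonProb_eq_zero _ _ _ hP)) bot_le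

theorem alwaysProb_le_sum (α : Strategy L A) (l : L) {P : List (A × L) → Prop}
    (hP : PrefixClosed P) (k : ℕ) :
    M.alwaysProb α l P ≤
      ∑ g : Fin k → A × L, M.prefProb α l (List.ofFn g) *
        M.alwaysProb (α.after l (List.ofFn g)) (lastState l (List.ofFn g))
          (fun h => P (List.ofFn g ++ h)) :=
  calc M.alwaysProb α l P ≤ ⨅ m, M.horizonProb α l (k + m) P := le_iInf fun m => iInf_le _ _
    _ = ⨅ m, ∑ g : Fin k → A × L, M.prefProb α l (List.ofFn g) *
          M.horizonProb (α.after l (List.ofFn g)) (lastState l (List.ofFn g)) m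
            (fun h => P (List.ofFn g ++ h)) := by simp only [horizonProb_add]
    _ = ∑ g : Fin k → A × L, ⨅ m, M.prefProb α l (List.ofFn g) *
          M.horizonProb (α.after l (List.ofFn g)) (lastState l (List.ofFn g)) m
            (fun h => P (List.ofFn g ++ h)) :=
      ENNReal.iInf_sum fun _ i j => ⟨max i j, fun g _ =>
        ⟨mul_le_mul_right (horizonProb_antitone _ _ (hP.append_left _) (le_max_left i j)) _,
          mul_le_mul_right (horizonProb_antitone _ _ (hP.append_left _) (le_max_right i j)) _⟩⟩
    _ = _ := by
      refine Finset.sum_congr rfl fun g _ => (ENNReal.mul_iInf fun htop => ?_).symm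
      exact absurd htop (ne_top_of_le_ne_top ENNReal.one_ne_top (prefProb_le_one _ _ _))

theorem safeProb_eq_alwaysProb (α : Strategy L A) (l : L) :
    M.safeProb α l T = M.alwaysProb α l (SafeFrom 0 l T) :=
  rfl

theorem coBuchiProb_eq_iSup_alwaysProb (α : Strategy L A) (l : L) :
    M.coBuchiProb α l T = ⨆ k, M.alwaysProb α l (SafeFrom k l T) := by
  refine iSup_congr fun k => iInf_congr fun n => congrArg _ (funext fun h => propext ?_)
  simp only [SafeFrom, List.mem_drop_iff_getElem, List.get_eq_getElem]
  constructor
  · rintro H s ⟨j, hj, rfl⟩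
    exact H (k + j) (by omega) (Nat.le_add_right k j)
  · intro H j hj hkj
    exact H _ ⟨j - k, by omega, by congr 1; omega⟩

theorem safeProb_le_one (α : Strategy L A) (l : L) : M.safeProb α l T ≤ 1 :=
  (iInf_le _ 0).trans (horizonProb_le_one _ _ _ _)

theorem safeProb_le_coBuchiProb (α : Strategy L A) (l : L) :
    M.safeProb α l T ≤ M.coBuchiProb α l T := by
  rw [safeProb_eq_alwaysProb, coBuchiProb_eq_iSup_alwaysProb]
  exact le_iSup (fun k => M.alwaysProb α l (SafeFrom k l T)) 0

end Always

theorem exists_reachable_safeProb_pos_of_coBuchiProb_pos {α : Strategy L A} {l : L}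
    (hα : M.ObservationBased α) (hpos : 0 < M.coBuchiProb α l T) :
    ∃ l', M.ReachableFrom l l' ∧ ∃ β, M.ObservationBased β ∧ 0 < M.safeProb β l' T := by
  rw [coBuchiProb_eq_iSup_alwaysProb] at hpos
  obtain ⟨k, hk⟩ := lt_iSup_iff.1 hpos
  obtain ⟨g, -, hg⟩ :=
    Finset.sum_pos_iff.1 (hk.trans_le (alwaysProb_le_sum α l (prefixClosed_safeFrom k l T) k))
  obtain ⟨hprefix, hsafe⟩ := CanonicallyOrderedAdd.mul_pos.1 hg
  refine ⟨_, reachableFrom_lastState _ hprefix, _, hα.after l (List.ofFn g), ?_⟩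
  simpa only [safeProb_eq_alwaysProb,
    safeFrom_length_append (List.length_ofFn (f := g))] using hsafe

/-- Conditioning on the first `n` steps: after a safe prefix of positive probability, the residual
strategy is safe with probability at most `c`. -/
theorem safeProb_le_mul_horizonProb {α : Strategy L A} {l : L} {c : ℝ≥0∞}
    (hc : ∀ l', M.ReachableFrom l l' → ∀ β, M.ObservationBased β → M.safeProb β l' T ≤ c)
    (hα : M.ObservationBased α) (n : ℕ) :
    M.safeProb α l T ≤ c * M.horizonProb α l n (SafeFrom 0 l T) := by
  classical
  rw [safeProb_eq_alwaysProb]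
  refine (alwaysProb_le_sum α l (prefixClosed_safeFrom 0 l T) n).trans ?_
  rw [horizonProb, Finset.mul_sum]
  refine Finset.sum_le_sum fun g _ => ?_
  simp only [safeFrom_zero_append, Set.indicator_apply, Set.mem_ofPred_eq]
  split_ifs with hg
  · rcases eq_or_ne (M.prefProb α l (List.ofFn g)) 0 with h0 | h0
    · simp [h0]
    rw [mul_comm c]
    gcongr
    simp only [hg, true_and, ← safeProb_eq_alwaysProb]
    exact hc _ (reachableFrom_lastState _ (pos_iff_ne_zero.2 h0)) _ (hα.after _ _)
  · simp [hg, alwaysProb_eq_zero]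

theorem safeProb_eq_zero_of_forall_reachable_le {α : Strategy L A} {l : L} {c : ℝ≥0∞}
    (hc1 : c < 1)
    (hc : ∀ l', M.ReachableFrom l l' → ∀ β, M.ObservationBased β → M.safeProb β l' T ≤ c)
    (hα : M.ObservationBased α) : M.safeProb α l T = 0 := by
  have hle : M.safeProb α l T ≤ c * M.safeProb α l T := by
    rw [safeProb_eq_alwaysProb, alwaysProb, ENNReal.mul_iInf fun htop => absurd htop hc1.ne_top]
    exact le_iInf (safeProb_le_mul_horizonProb hc hα)
  by_contra hne
  have hlt := ENNReal.mul_lt_mul_right hne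
    (ne_top_of_le_ne_top ENNReal.one_ne_top (safeProb_le_one α l)) hc1
  rw [mul_one, mul_comm] at hlt
  exact hle.not_gt hlt

variable (M) in
noncomputable def safeValue (l : L) (T : Set L) : ℝ≥0∞ :=
  ⨆ (β : Strategy L A) (_ : M.ObservationBased β), M.safeProb β l T

theorem exists_reachable_safeValue_eq_one_of_safeProb_pos {α : Strategy L A} {l : L}
    (hα : M.ObservationBased α) (hpos : 0 < M.safeProb α l T) :
    ∃ l', M.ReachableFrom l l' ∧ M.safeValue l' T = 1 := by
  have : Nonempty {l' // M.ReachableFrom l l'} := ⟨⟨l, Relation.ReflTransGen.refl⟩⟩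
  obtain ⟨⟨l', hl'⟩, hmax⟩ :=
    exists_eq_ciSup_of_finite (f := fun r : {l' // M.ReachableFrom l l'} => M.safeValue r.1 T)
  refine ⟨l', hl', le_antisymm (iSup₂_le fun β _ => safeProb_le_one β l') (not_lt.1 fun hlt => ?_)⟩
  refine hpos.ne' (safeProb_eq_zero_of_forall_reachable_le hlt (fun l'' hl'' β hβ => ?_) hα)
  rw [hmax]
  exact le_iSup_of_le (⟨l'', hl''⟩ : {l' // M.ReachableFrom l l'})
    (le_iSup₂ (f := fun β (_ : M.ObservationBased β) => M.safeProb β l'' T) β hβ)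

theorem exists_safeProb_eq_one_of_safeValue_eq_one {l : L} (hv : M.safeValue l T = 1) :
    ∃ β, M.ObservationBased β ∧ M.safeProb β l T = 1 := by
  have happrox : ∀ k : ℕ, ∃ β, M.ObservationBased β ∧ 1 - (k : ℝ≥0∞)⁻¹ < M.safeProb β l T := by
    intro k
    have hlt : 1 - (k : ℝ≥0∞)⁻¹ < M.safeValue l T := by
      rw [hv]
      exact ENNReal.sub_lt_self ENNReal.one_ne_top one_ne_zero
        (ENNReal.inv_ne_zero.2 (ENNReal.natCast_ne_top k))
    obtain ⟨β, hβ⟩ := lt_iSup_iff.1 hlt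
    obtain ⟨hβobs, hβlt⟩ := lt_iSup_iff.1 hβ
    exact ⟨β, hβobs, hβlt⟩
  choose β hβ hβlt using happrox
  obtain ⟨c, φ, hφ, hlim⟩ := CompactSpace.tendsto_subseq fun k => (β k).weights
  obtain ⟨γ, rfl⟩ := exists_weights_eq_of_tendsto hlim
  refine ⟨γ, ObservationBased.of_tendsto (fun k => hβ (φ k)) hlim,
    le_antisymm (safeProb_le_one γ l) (le_iInf fun n => ?_)⟩
  have hone : Tendsto (fun k => 1 - ((φ k : ℕ) : ℝ≥0∞)⁻¹) atTop (𝓝 1) := by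
    simpa using (ENNReal.Tendsto.sub tendsto_const_nhds
      (ENNReal.tendsto_inv_nat_nhds_zero.comp hφ.tendsto_atTop) (Or.inl ENNReal.one_ne_top))
  exact le_of_tendsto_of_tendsto' hone (tendsto_horizonProb hlim l n _)
    fun k => (hβlt (φ k)).le.trans (iInf_le _ n)

theorem coBuchiProb_cons_pos {β : Strategy L A} {l l' : L} {a : A} (ha : 0 < M.δ l a l')
    (hpos : 0 < M.coBuchiProb β l' T) : 0 < M.coBuchiProb (Strategy.cons a β) l T := by
  rw [coBuchiProb_eq_iSup_alwaysProb] at hpos ⊢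
  obtain ⟨k, hk⟩ := lt_iSup_iff.1 hpos
  refine lt_iSup_iff.2 ⟨k + 1, (ENNReal.mul_pos ha.ne' hk.ne').trans_le (le_iInf fun n => ?_)⟩
  let step : Fin 1 → A × L := fun _ => (a, l')
  have hfirst : Strategy.cons a β l [] = PMF.pure a := rfl
  calc M.δ l a l' * M.alwaysProb β l' (SafeFrom k l' T)
      ≤ M.δ l a l' * M.horizonProb β l' n (SafeFrom k l' T) := by gcongr; exact iInf_le _ n
    _ = M.prefProb (Strategy.cons a β) l (List.ofFn step) *
          M.horizonProb ((Strategy.cons a β).after l (List.ofFn step))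
            (lastState l (List.ofFn step)) n
            (fun h => SafeFrom (k + 1) l T (List.ofFn step ++ h)) := by
        simp only [step, List.ofFn_const, List.replicate_one, prefProb_cons, hfirst, PMF.pure_apply,
          if_true, one_mul, prefProb_nil, mul_one]
        rfl
    _ ≤ M.horizonProb (Strategy.cons a β) l (1 + n) (SafeFrom (k + 1) l T) := by
        rw [horizonProb_add]
        exact Finset.single_le_sum (N := ℝ≥0∞) (fun _ _ => zero_le) (Finset.mem_univ step)
    _ ≤ M.horizonProb (Strategy.cons a β) l n (SafeFrom (k + 1) l T) :=
        horizonProb_antitone _ _ (prefixClosed_safeFrom _ _ _) (Nat.le_add_left n 1)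

end POMDP

/-- Player 1 has an observation-based strategy positive winning for
`coBüchi(T)` from `l` iff there is a state `l'` reachable from `l` in the
underlying graph such that Player 1 has an observation-based strategy that is
almost-sure winning for `Safe(T)` from `l'`. -/
theorem positive_cobuchi_iff_reach_almost_safe {L A O : Type}
    [Fintype L] [Fintype A] (M : POMDP L A O) (T : Set L) (l : L) :
    (∃ α : POMDP.Strategy L A, M.ObservationBased α ∧ 0 < M.coBuchiProb α l T) ↔
      ∃ l' : L, M.ReachableFrom l l' ∧
        ∃ α : POMDP.Strategy L A, M.ObservationBased α ∧ M.safeProb α l' T = 1 := by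
  constructor
  · rintro ⟨α, hα, hpos⟩
    obtain ⟨l₁, hl₁, β, hβ, hβpos⟩ := POMDP.exists_reachable_safeProb_pos_of_coBuchiProb_pos hα hpos
    obtain ⟨l₂, hl₂, hv⟩ := POMDP.exists_reachable_safeValue_eq_one_of_safeProb_pos hβ hβpos
    exact ⟨l₂, Relation.ReflTransGen.trans hl₁ hl₂,
      POMDP.exists_safeProb_eq_one_of_safeValue_eq_one hv⟩
  · rintro ⟨l', hl', α, hα, hsafe⟩
    induction hl' using Relation.ReflTransGen.head_induction_on with
    | refl =>
      exact ⟨α, hα, (hsafe ▸ one_pos).trans_le (POMDP.safeProb_le_coBuchiProb α l')⟩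
    | head hedge _ ih =>
      obtain ⟨a, ha⟩ := hedge
      obtain ⟨β, hβ, hpos⟩ := ih
      exact ⟨_, hβ.cons a, POMDP.coBuchiProb_cons_pos ha hpos⟩
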